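/- arXiv:0904.4275 — 4 statements merged into one kernel-verified Lean document; each statement's English description precedes it below -/
import Mathlib

section
/- Let $0 < \lambda < N$ and let $f, g$ be nonnegative measurable functions on $\mathbb{R}^N$. With $(\Theta_B f)(x) = (r/|x-a|)^{2N-\lambda} f(\Theta_B(x))$ for the inversion $\Theta_B$ through the sphere of radius $r$ centered at $a$, one has the conformal invariance $\iint \frac{(\Theta_B f)(x)\,(\Theta_B g)(y)}{|x-y|^\lambda}\,dx\,dy = \iint \frac{f(x)\,g(y)}{|x-y|^\lambda}\,dx\,dy$. -/
/-!
The inversion `Θ` in the sphere of radius `r` about `a` has Jacobian `(r/|x-a|)^{2N}` and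
satisfies `|Θx - Θy| = (r/|x-a|)(r/|y-a|)|x-y|`. Substituting `x ↦ Θx`, `y ↦ Θy` in the right-hand
side, the two Jacobians times the transformed kernel are exactly the weights
`(r/|x-a|)^{2N-λ} (r/|y-a|)^{2N-λ}` of the lifted functions times `|x-y|^{-λ}`. The centre `a`,
where these formulas break down, is a null set because `N ≥ 1`.
-/

open MeasureTheory ENNReal

noncomputable def sphereInv {N : ℕ} (a : EuclideanSpace ℝ (Fin N)) (r : ℝ)
    (x : EuclideanSpace ℝ (Fin N)) : EuclideanSpace ℝ (Fin N) :=
  (r ^ 2 / ‖x - a‖ ^ 2) • (x - a) + a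

/-- The lift of the inversion to functions: `(Θ_B f)(x) = (r/|x-a|)^{2N-λ} f(Θ_B(x))`. -/
noncomputable def invLift {N : ℕ} (lam : ℝ) (a : EuclideanSpace ℝ (Fin N)) (r : ℝ)
    (f : EuclideanSpace ℝ (Fin N) → ℝ≥0∞) (x : EuclideanSpace ℝ (Fin N)) : ℝ≥0∞ :=
  ENNReal.ofReal ((r / ‖x - a‖) ^ (2 * (N : ℝ) - lam)) * f (sphereInv a r x)

open EuclideanGeometry Module

section Inversion

variable {E : Type*} [NormedAddCommGroup E] [InnerProductSpace ℝ E]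

theorem abs_det_fderiv_inversion [FiniteDimensional ℝ E] {a x : E} (hx : x ≠ a) (r : ℝ) :
    |((r / dist x a) ^ 2 • ((ℝ ∙ (x - a))ᗮ.reflection : E →L[ℝ] E)).det| =
      (r / dist x a) ^ (2 * finrank ℝ E) := by
  have hreflection : ((ℝ ∙ (x - a))ᗮ.reflection : E →L[ℝ] E).det = -1 := by
    refine (Submodule.det_reflection _).trans ?_
    rw [Submodule.orthogonal_orthogonal, finrank_span_singleton (sub_ne_zero.2 hx), pow_one]
  rw [ContinuousLinearMap.det, ContinuousLinearMap.toLinearMap_smul, LinearMap.det_smul,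
    ← ContinuousLinearMap.det, hreflection, mul_neg_one, abs_neg, abs_of_nonneg (by positivity),
    pow_mul]

theorem lintegral_jacobian_mul_comp_inversion [FiniteDimensional ℝ E] [Nontrivial E]
    [MeasurableSpace E] [BorelSpace E] (μ : Measure E) [μ.IsAddHaarMeasure] (a : E) {r : ℝ}
    (hr : r ≠ 0) (φ : E → ℝ≥0∞) :
    ∫⁻ x, ENNReal.ofReal ((r / dist x a) ^ (2 * finrank ℝ E)) * φ (inversion a r x) ∂μ =
      ∫⁻ x, φ x ∂μ := by
  have hinv := inversion_involutive a hr
  have himage : inversion a r '' {a}ᶜ = {a}ᶜ := by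
    rw [Set.image_compl_eq hinv.bijective, Set.image_singleton, inversion_self]
  rw [← restrict_compl_singleton (μ := μ) a]
  conv_rhs => rw [← himage]
  rw [lintegral_image_eq_lintegral_abs_det_fderiv_mul μ (measurableSet_singleton a).compl
    (fun x hx => (hasFDerivAt_inversion hx).hasFDerivWithinAt) hinv.injective.injOn]
  refine setLIntegral_congr_fun (measurableSet_singleton a).compl fun x hx => ?_
  rw [abs_det_fderiv_inversion hx]

theorem dist_inversion_inversion_rpow {a x y : E} (hx : x ≠ a) (hy : y ≠ a) {r : ℝ}
    (hr : 0 ≤ r) (s : ℝ) :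
    dist (inversion a r x) (inversion a r y) ^ s =
      (r / dist x a) ^ s * (r / dist y a) ^ s * dist x y ^ s := by
  rw [dist_inversion_inversion hx hy, ← Real.mul_rpow, ← Real.mul_rpow]
  · congr 1
    field_simp
  all_goals positivity

end Inversion

theorem sphereInv_eq_inversion {N : ℕ} (a : EuclideanSpace ℝ (Fin N)) (r : ℝ) :
    sphereInv a r = inversion a r := by
  ext1 x
  simp only [sphereInv, inversion_def, vsub_eq_sub, vadd_eq_add, dist_eq_norm, div_pow]

theorem invLift_eq_of_ne {N : ℕ} (lam : ℝ) {a x : EuclideanSpace ℝ (Fin N)} (hx : x ≠ a)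
    {r : ℝ} (hr : 0 < r) (f : EuclideanSpace ℝ (Fin N) → ℝ≥0∞) :
    invLift lam a r f x = ENNReal.ofReal ((r / dist x a) ^ (2 * N)) *
      ENNReal.ofReal ((r / dist x a) ^ (-lam)) * f (inversion a r x) := by
  have hpos : 0 < r / dist x a := div_pos hr (dist_pos.2 hx)
  rw [invLift, sphereInv_eq_inversion, ← dist_eq_norm, ← ENNReal.ofReal_mul (by positivity),
    ← Real.rpow_natCast, ← Real.rpow_add hpos, sub_eq_add_neg]
  norm_num

theorem conformal_invariance_inversion_general (N : ℕ) (hN : 1 ≤ N) (lam : ℝ)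
    (a : EuclideanSpace ℝ (Fin N)) (r : ℝ) (hr : 0 < r)
    (f g : EuclideanSpace ℝ (Fin N) → ℝ≥0∞) :
    ∫⁻ x, ∫⁻ y, invLift lam a r f x * invLift lam a r g y * ENNReal.ofReal (‖x - y‖ ^ (-lam)) =
      ∫⁻ x, ∫⁻ y, f x * g y * ENNReal.ofReal (‖x - y‖ ^ (-lam)) := by
  have : NeZero N := ⟨by omega⟩
  have hcov := lintegral_jacobian_mul_comp_inversion
    (volume : Measure (EuclideanSpace ℝ (Fin N))) a hr.ne'
  rw [finrank_euclideanSpace_fin] at hcov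
  simp only [← dist_eq_norm]
  symm
  calc ∫⁻ x, ∫⁻ y, f x * g y * ENNReal.ofReal (dist x y ^ (-lam))
      = ∫⁻ x, ∫⁻ y, ENNReal.ofReal ((r / dist y a) ^ (2 * N)) *
          (f x * g (inversion a r y) * ENNReal.ofReal (dist x (inversion a r y) ^ (-lam))) :=
        lintegral_congr fun x => (hcov _).symm
    _ = ∫⁻ x, ENNReal.ofReal ((r / dist x a) ^ (2 * N)) * ∫⁻ y,
          ENNReal.ofReal ((r / dist y a) ^ (2 * N)) * (f (inversion a r x) * g (inversion a r y) *
            ENNReal.ofReal (dist (inversion a r x) (inversion a r y) ^ (-lam))) :=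
        (hcov _).symm
    _ = _ := by
      refine lintegral_congr_ae ?_
      filter_upwards [Measure.ae_ne volume a] with x hx
      rw [← lintegral_const_mul' _ _ ENNReal.ofReal_ne_top]
      refine lintegral_congr_ae ?_
      filter_upwards [Measure.ae_ne volume a] with y hy
      rw [invLift_eq_of_ne lam hx hr, invLift_eq_of_ne lam hy hr,
        dist_inversion_inversion_rpow hx hy hr.le, ENNReal.ofReal_mul (by positivity),
        ENNReal.ofReal_mul (by positivity)]
      ring

theorem conformal_invariance_inversion (N : ℕ) (hN : 1 ≤ N) (lam : ℝ)
    (hl : 0 < lam) (hlN : lam < N)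
    (a : EuclideanSpace ℝ (Fin N)) (r : ℝ) (hr : 0 < r)
    (f g : EuclideanSpace ℝ (Fin N) → ℝ≥0∞) (hf : Measurable f) (hg : Measurable g) :
    ∫⁻ x, ∫⁻ y, invLift lam a r f x * invLift lam a r g y * ENNReal.ofReal (‖x - y‖ ^ (-lam)) =
      ∫⁻ x, ∫⁻ y, f x * g y * ENNReal.ofReal (‖x - y‖ ^ (-lam)) :=
  conformal_invariance_inversion_general N hN lam a r hr f g
end

section
/- Let $N = 1$, $0 < \lambda < 1$, and let $(\Theta_H f)(x) = f(-x)$. For an integrable $f$ on $\mathbb{R}$, define $f^i(x) = f(x)$ for $x > 0$ and $f^i(x) = f(-x)$ for $x < 0$, and $f^o(x) = f(-x)$ for $x>0$, $f^o(x) = f(x)$ for $x<0$. Then for any integrable $f$ on $\mathbb{R}$ with $I_\lambda[|f|,|f|] < \infty$, setting $g(x) = f(x) - f(-x)$ for $x > 0$ and $g(x)=0$ for $x \le 0$, one has $\tfrac12(I_\lambda[f^i,f^i] + I_\lambda[f^o,f^o]) - I_\lambda[f,f] = \int_0^\infty\int_0^\infty \frac{g(x)g(y)}{(x+y)^\lambda}\,dx\,dy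 \geq 0$. -/
open MeasureTheory Set

/-- The HLS functional `I_λ[f,g] = ∫∫ f(x) g(y) |x-y|^{-λ} dx dy` on the real line. -/
noncomputable def Ilam (lam : ℝ) (f g : ℝ → ℝ) : ℝ :=
  ∫ x : ℝ, ∫ y : ℝ, f x * g y * |x - y| ^ (-lam)

namespace RPaux

lemma int_neg_comp {u : ℝ → ℝ} (hu : Integrable u (volume : Measure ℝ)) :
    Integrable (fun x => u (-x)) (volume : Measure ℝ) :=
  ((Measure.measurePreserving_neg (volume : Measure ℝ)).integrable_comp_emb
    (Homeomorph.neg ℝ).measurableEmbedding).mpr hu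

lemma fold {u : ℝ → ℝ} (hu : Integrable u (volume : Measure ℝ)) :
    ∫ x, u x = ∫ x in Ioi (0:ℝ), (u x + u (-x)) := by
  have h2 : ∫ x in Ioi (0:ℝ), u (-x) = ∫ x in Iic (0:ℝ), u x := by
    simpa using integral_comp_neg_Ioi 0 u
  rw [integral_add hu.integrableOn ((int_neg_comp hu).integrableOn), h2, add_comm]
  exact (intervalIntegral.integral_Iic_add_Ioi hu.integrableOn hu.integrableOn).symm

abbrev T1 : ℝ × ℝ → ℝ × ℝ := Prod.map Neg.neg id
abbrev T2 : ℝ × ℝ → ℝ × ℝ := Prod.map id Neg.neg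
abbrev T12 : ℝ × ℝ → ℝ × ℝ := Prod.map Neg.neg Neg.neg

lemma mpT1 : MeasurePreserving T1 (volume.prod volume) (volume.prod volume) :=
  (Measure.measurePreserving_neg _).prod (MeasurePreserving.id _)
lemma mpT2 : MeasurePreserving T2 (volume.prod volume) (volume.prod volume) :=
  (MeasurePreserving.id _).prod (Measure.measurePreserving_neg _)
lemma mpT12 : MeasurePreserving T12 (volume.prod volume) (volume.prod volume) :=
  (Measure.measurePreserving_neg _).prod (Measure.measurePreserving_neg _)

lemma embT1 : MeasurableEmbedding T1 :=
  ((Homeomorph.neg ℝ).prodCongr (Homeomorph.refl ℝ)).measurableEmbedding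
lemma embT2 : MeasurableEmbedding T2 :=
  ((Homeomorph.refl ℝ).prodCongr (Homeomorph.neg ℝ)).measurableEmbedding
lemma embT12 : MeasurableEmbedding T12 :=
  ((Homeomorph.neg ℝ).prodCongr (Homeomorph.neg ℝ)).measurableEmbedding

/-- Folding a plane integral onto the positive quadrant. -/
lemma quad {H : ℝ × ℝ → ℝ} (hH : Integrable H (volume.prod volume)) :
    ∫ x : ℝ, ∫ y : ℝ, H (x, y) =
      ∫ x in Ioi (0:ℝ), ∫ y in Ioi (0:ℝ),
        (H (x, y) + H (-x, y) + H (x, -y) + H (-x, -y)) := by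
  have hH1 : Integrable (fun p : ℝ × ℝ => H (-p.1, p.2)) (volume.prod volume) :=
    (mpT1.integrable_comp_emb embT1).mpr hH
  have hG : Integrable (fun x => ∫ y, H (x, y)) (volume : Measure ℝ) :=
    hH.integral_prod_left
  rw [fold hG]
  refine integral_congr_ae ?_
  filter_upwards [ae_restrict_of_ae (hH.prod_right_ae.and hH1.prod_right_ae)] with x hx
  obtain ⟨hx1, hx2⟩ := hx
  have h3 : (∫ y, H (x, y)) + (∫ y, H (-x, y)) = ∫ y, (H (x, y) + H (-x, y)) :=
    (integral_add hx1 hx2).symm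
  rw [h3, fold (u := fun y => H (x, y) + H (-x, y)) (hx1.add hx2)]
  exact integral_congr_ae (ae_of_all _ fun y => by ring)

lemma Ilam_congr {lam : ℝ} {u v : ℝ → ℝ} (h : u =ᵐ[(volume : Measure ℝ)] v) :
    Ilam lam u u = Ilam lam v v := by
  unfold Ilam
  refine integral_congr_ae ?_
  filter_upwards [h] with x hx
  rw [hx]
  refine integral_congr_ae ?_
  filter_upwards [h] with y hy
  rw [hy]

lemma int_of_quadrants {H : ℝ × ℝ → ℝ}
    (hpp : IntegrableOn H (Ioi 0 ×ˢ Ioi 0) (volume.prod volume))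
    (hpm : IntegrableOn H (Ioi 0 ×ˢ Iio 0) (volume.prod volume))
    (hmp : IntegrableOn H (Iio 0 ×ˢ Ioi 0) (volume.prod volume))
    (hmm : IntegrableOn H (Iio 0 ×ˢ Iio 0) (volume.prod volume)) :
    Integrable H (volume.prod volume) := by
  set s : Set (ℝ × ℝ) := ((Ioi 0 ×ˢ Ioi 0 ∪ Ioi 0 ×ˢ Iio 0) ∪ (Iio 0 ×ˢ Ioi 0 ∪ Iio 0 ×ˢ Iio 0))
  have hu : IntegrableOn H s (volume.prod volume) := (hpp.union hpm).union (hmp.union hmm)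
  have hnull : (volume.prod volume) sᶜ = 0 := by
    have hsub : sᶜ ⊆ ({(0:ℝ)} ×ˢ (univ : Set ℝ)) ∪ ((univ : Set ℝ) ×ˢ {(0:ℝ)}) := by
      intro p hp
      by_contra hc
      simp only [mem_union, mem_prod, mem_singleton_iff, mem_univ, true_and, and_true,
        not_or] at hc
      obtain ⟨hc1, hc2⟩ := hc
      apply hp
      rcases lt_trichotomy p.1 0 with hx | hx | hx
      · rcases lt_trichotomy p.2 0 with hy | hy | hy
        · exact Or.inr (Or.inr ⟨hx, hy⟩)
        · exact absurd hy hc2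
        · exact Or.inr (Or.inl ⟨hx, hy⟩)
      · exact absurd hx hc1
      · rcases lt_trichotomy p.2 0 with hy | hy | hy
        · exact Or.inl (Or.inr ⟨hx, hy⟩)
        · exact absurd hy hc2
        · exact Or.inl (Or.inl ⟨hx, hy⟩)
    refine measure_mono_null hsub (measure_union_null ?_ ?_)
    · rw [Measure.prod_prod]; simp
    · rw [Measure.prod_prod]; simp
  have hs_ae : s =ᵐ[volume.prod volume] (univ : Set (ℝ × ℝ)) := by
    rw [ae_eq_univ]; exact hnull
  rw [← integrableOn_univ]
  unfold IntegrableOn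
  rwa [← Measure.restrict_congr_set hs_ae]

lemma II {F : ℝ → ℝ → ℝ}
    (h : Integrable (fun p : ℝ × ℝ => F p.1 p.2)
      ((volume.prod volume).restrict (Ioi 0 ×ˢ Ioi 0))) :
    ∫ x in Ioi (0:ℝ), ∫ y in Ioi (0:ℝ), F x y
      = ∫ p : ℝ × ℝ, F p.1 p.2 ∂((volume.prod volume).restrict (Ioi 0 ×ˢ Ioi 0)) := by
  have h' : Integrable (Function.uncurry F)
      ((volume.restrict (Ioi (0:ℝ))).prod (volume.restrict (Ioi (0:ℝ)))) := by
    rw [Measure.prod_restrict]; exact h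
  have := integral_integral h'
  rwa [Measure.prod_restrict] at this

theorem main_meas (lam : ℝ) (h1 : 0 < lam) (h2 : lam < 1)
    (f : ℝ → ℝ) (hm : Measurable f) (hf : Integrable f)
    (hfin : (∫⁻ x : ℝ, ∫⁻ y : ℝ, ENNReal.ofReal (|f x| * |f y| * |x - y| ^ (-lam))) ≠ ⊤)
    (fi fo g : ℝ → ℝ)
    (hfi : fi = fun x => if 0 ≤ x then f x else f (-x))
    (hfo : fo = fun x => if 0 ≤ x then f (-x) else f x)
    (hg : g = fun x => if 0 < x then f x - f (-x) else 0) :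
    ((1/2) * (Ilam lam fi fi + Ilam lam fo fo) - Ilam lam f f =
      ∫ x in Ioi (0:ℝ), ∫ y in Ioi (0:ℝ), g x * g y / (x + y) ^ lam) ∧
    0 ≤ ∫ x in Ioi (0:ℝ), ∫ y in Ioi (0:ℝ), g x * g y / (x + y) ^ lam := by
  -- basic measurability
  have hb : Measurable (fun x => f (-x)) := hm.comp measurable_neg
  have hgm : Measurable g := by
    rw [hg]
    exact Measurable.ite (measurableSet_lt measurable_const measurable_id)
      (hm.sub hb) measurable_const
  have hfim : Measurable fi := by
    rw [hfi]
    exact Measurable.ite (measurableSet_le measurable_const measurable_id) hm hb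
  have hfom : Measurable fo := by
    rw [hfo]
    exact Measurable.ite (measurableSet_le measurable_const measurable_id) hb hm
  have hDm : Measurable (fun p : ℝ × ℝ => |p.1 - p.2| ^ (-lam)) := by fun_prop
  have hSm : Measurable (fun p : ℝ × ℝ => (p.1 + p.2) ^ (-lam)) := by fun_prop
  -- the master integrable kernel
  have hWm : Measurable (fun p : ℝ × ℝ => |f p.1| * |f p.2| * |p.1 - p.2| ^ (-lam)) := by
    fun_prop
  have hWfin : (∫⁻ p : ℝ × ℝ, ENNReal.ofReal (|f p.1| * |f p.2| * |p.1 - p.2| ^ (-lam))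
      ∂(volume.prod volume)) ≠ ⊤ := by
    rw [lintegral_prod _ hWm.ennreal_ofReal.aemeasurable]
    exact hfin
  have hW : Integrable (fun p : ℝ × ℝ => |f p.1| * |f p.2| * |p.1 - p.2| ^ (-lam))
      (volume.prod volume) := by
    refine ⟨hWm.aestronglyMeasurable, ?_⟩
    rw [hasFiniteIntegral_iff_norm, lt_top_iff_ne_top]
    have he : ∀ p : ℝ × ℝ, ENNReal.ofReal ‖|f p.1| * |f p.2| * |p.1 - p.2| ^ (-lam)‖
        = ENNReal.ofReal (|f p.1| * |f p.2| * |p.1 - p.2| ^ (-lam)) := fun p => by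
      rw [Real.norm_eq_abs, abs_of_nonneg (by positivity)]
    simpa only [he] using hWfin
  have hH : Integrable (fun p : ℝ × ℝ => f p.1 * f p.2 * |p.1 - p.2| ^ (-lam))
      (volume.prod volume) := by
    refine hW.mono' (by fun_prop : Measurable _).aestronglyMeasurable (ae_of_all _ fun p => ?_)
    exact le_of_eq (by
      rw [Real.norm_eq_abs, abs_mul, abs_mul, abs_of_nonneg (Real.rpow_nonneg (abs_nonneg _) _)])
  -- quadrant measure basics
  have hQmeas : MeasurableSet (Ioi (0:ℝ) ×ˢ Ioi (0:ℝ)) :=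
    measurableSet_Ioi.prod measurableSet_Ioi
  have haeS : ∀ᵐ p : ℝ × ℝ ∂((volume.prod volume).restrict (Ioi 0 ×ˢ Ioi 0)),
      0 < p.1 ∧ 0 < p.2 := by
    filter_upwards [ae_restrict_mem hQmeas] with p hp
    exact ⟨hp.1, hp.2⟩
  have hdiag : ∀ᵐ p : ℝ × ℝ ∂((volume.prod volume).restrict (Ioi 0 ×ˢ Ioi 0)),
      p.1 ≠ p.2 := by
    refine ae_restrict_of_ae ?_
    have hms : MeasurableSet {p : ℝ × ℝ | p.1 = p.2} :=
      measurableSet_eq_fun measurable_fst measurable_snd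
    have h0 : (volume.prod volume) {p : ℝ × ℝ | p.1 = p.2} = 0 := by
      rw [Measure.prod_apply hms]
      have hx0 : ∀ x : ℝ, (volume : Measure ℝ) (Prod.mk x ⁻¹' {p : ℝ × ℝ | p.1 = p.2}) = 0 := by
        intro x
        have : (Prod.mk x ⁻¹' {p : ℝ × ℝ | p.1 = p.2}) = {x} := by
          ext y; simp [eq_comm]
        rw [this]; exact measure_singleton x
      simp [hx0]
    exact measure_eq_zero_iff_ae_notMem.mp h0
  have hkey : ∀ᵐ p : ℝ × ℝ ∂((volume.prod volume).restrict (Ioi 0 ×ˢ Ioi 0)),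
      (p.1 + p.2) ^ (-lam) ≤ |p.1 - p.2| ^ (-lam) := by
    filter_upwards [haeS, hdiag] with p hp hne
    have habs : 0 < |p.1 - p.2| := abs_pos.mpr (sub_ne_zero.mpr hne)
    have hle : |p.1 - p.2| ≤ p.1 + p.2 :=
      abs_le.mpr ⟨by linarith [hp.1, hp.2], by linarith [hp.1, hp.2]⟩
    exact Real.rpow_le_rpow_of_nonpos habs hle (by linarith)
  -- base integrable facts on the quadrant
  have hA1 : Integrable (fun p : ℝ × ℝ => f p.1 * f p.2 * |p.1 - p.2| ^ (-lam))
      ((volume.prod volume).restrict (Ioi 0 ×ˢ Ioi 0)) := hH.integrableOn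
  have hHT12 : Integrable (fun p : ℝ × ℝ => f (-p.1) * f (-p.2) * |(-p.1) - -p.2| ^ (-lam))
      (volume.prod volume) := (mpT12.integrable_comp_emb embT12).mpr hH
  have hA2 : Integrable (fun p : ℝ × ℝ => f (-p.1) * f (-p.2) * |p.1 - p.2| ^ (-lam))
      ((volume.prod volume).restrict (Ioi 0 ×ˢ Ioi 0)) := by
    refine hHT12.integrableOn.congr (ae_of_all _ fun p => ?_)
    beta_reduce
    rw [show (-p.1) - -p.2 = -(p.1 - p.2) by ring, abs_neg]
  have hB11 : Integrable (fun p : ℝ × ℝ => f p.1 * f p.2 * (p.1 + p.2) ^ (-lam))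
      ((volume.prod volume).restrict (Ioi 0 ×ˢ Ioi 0)) := by
    refine hA1.norm.mono' (by fun_prop : Measurable _).aestronglyMeasurable ?_
    filter_upwards [haeS, hkey] with p hp hk
    beta_reduce
    have hS0 : (0:ℝ) ≤ (p.1 + p.2) ^ (-lam) := Real.rpow_nonneg (by linarith [hp.1, hp.2]) _
    have hD0 : (0:ℝ) ≤ |p.1 - p.2| ^ (-lam) := Real.rpow_nonneg (abs_nonneg _) _
    simp only [Real.norm_eq_abs, abs_mul, abs_of_nonneg hS0, abs_of_nonneg hD0]
    exact mul_le_mul_of_nonneg_left hk (mul_nonneg (abs_nonneg _) (abs_nonneg _))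
  have hB22 : Integrable (fun p : ℝ × ℝ => f (-p.1) * f (-p.2) * (p.1 + p.2) ^ (-lam))
      ((volume.prod volume).restrict (Ioi 0 ×ˢ Ioi 0)) := by
    refine hA2.norm.mono' (by fun_prop : Measurable _).aestronglyMeasurable ?_
    filter_upwards [haeS, hkey] with p hp hk
    beta_reduce
    have hS0 : (0:ℝ) ≤ (p.1 + p.2) ^ (-lam) := Real.rpow_nonneg (by linarith [hp.1, hp.2]) _
    have hD0 : (0:ℝ) ≤ |p.1 - p.2| ^ (-lam) := Real.rpow_nonneg (abs_nonneg _) _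
    simp only [Real.norm_eq_abs, abs_mul, abs_of_nonneg hS0, abs_of_nonneg hD0]
    exact mul_le_mul_of_nonneg_left hk (mul_nonneg (abs_nonneg _) (abs_nonneg _))
  have hHT2 : Integrable (fun p : ℝ × ℝ => f p.1 * f (-p.2) * |p.1 - -p.2| ^ (-lam))
      (volume.prod volume) := (mpT2.integrable_comp_emb embT2).mpr hH
  have hB12 : Integrable (fun p : ℝ × ℝ => f p.1 * f (-p.2) * (p.1 + p.2) ^ (-lam))
      ((volume.prod volume).restrict (Ioi 0 ×ˢ Ioi 0)) := by
    refine hHT2.integrableOn.congr ?_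
    filter_upwards [haeS] with p hp
    beta_reduce
    rw [sub_neg_eq_add, abs_of_pos (by linarith [hp.1, hp.2])]
  have hHT1 : Integrable (fun p : ℝ × ℝ => f (-p.1) * f p.2 * |(-p.1) - p.2| ^ (-lam))
      (volume.prod volume) := (mpT1.integrable_comp_emb embT1).mpr hH
  have hB21 : Integrable (fun p : ℝ × ℝ => f (-p.1) * f p.2 * (p.1 + p.2) ^ (-lam))
      ((volume.prod volume).restrict (Ioi 0 ×ˢ Ioi 0)) := by
    refine hHT1.integrableOn.congr ?_
    filter_upwards [haeS] with p hp
    beta_reduce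
    rw [show (-p.1) - p.2 = -(p.1 + p.2) by ring, abs_neg,
      abs_of_pos (by linarith [hp.1, hp.2])]
  have hGG : Integrable (fun p : ℝ × ℝ => g p.1 * g p.2 * (p.1 + p.2) ^ (-lam))
      ((volume.prod volume).restrict (Ioi 0 ×ˢ Ioi 0)) := by
    refine (((hB11.sub hB12).sub hB21).add hB22).congr ?_
    filter_upwards [haeS] with p hp
    simp only [Pi.add_apply, Pi.sub_apply, hg]
    simp only [if_pos hp.1, if_pos hp.2]
    ring
  -- values of fi, fo, g on the positive half line
  have hfiQ1 : ∀ x : ℝ, 0 < x → fi x = f x := fun x hx => by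
    simp only [hfi]; rw [if_pos hx.le]
  have hfiQ2 : ∀ x : ℝ, 0 < x → fi (-x) = f x := fun x hx => by
    simp only [hfi]; rw [if_neg (not_le.mpr (neg_lt_zero.mpr hx)), neg_neg]
  have hfoQ1 : ∀ x : ℝ, 0 < x → fo x = f (-x) := fun x hx => by
    simp only [hfo]; rw [if_pos hx.le]
  have hfoQ2 : ∀ x : ℝ, 0 < x → fo (-x) = f (-x) := fun x hx => by
    simp only [hfo]; rw [if_neg (not_le.mpr (neg_lt_zero.mpr hx))]
  -- preimages of the quadrants under the reflections
  have hpre1 : T1 ⁻¹' (Iio 0 ×ˢ Ioi 0) = Ioi (0:ℝ) ×ˢ Ioi (0:ℝ) := by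
    ext p
    simp only [mem_preimage, T1, Prod.map, mem_prod, mem_Iio, mem_Ioi, id]
    constructor
    · rintro ⟨hx, hy⟩; exact ⟨by linarith, hy⟩
    · rintro ⟨hx, hy⟩; exact ⟨by linarith, hy⟩
  have hpre2 : T2 ⁻¹' (Ioi 0 ×ˢ Iio 0) = Ioi (0:ℝ) ×ˢ Ioi (0:ℝ) := by
    ext p
    simp only [mem_preimage, T2, Prod.map, mem_prod, mem_Iio, mem_Ioi, id]
    constructor
    · rintro ⟨hx, hy⟩; exact ⟨hx, by linarith⟩
    · rintro ⟨hx, hy⟩; exact ⟨hx, by linarith⟩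
  have hpre12 : T12 ⁻¹' (Iio 0 ×ˢ Iio 0) = Ioi (0:ℝ) ×ˢ Ioi (0:ℝ) := by
    ext p
    simp only [mem_preimage, T12, Prod.map, mem_prod, mem_Iio, mem_Ioi]
    constructor
    · rintro ⟨hx, hy⟩; exact ⟨by linarith, by linarith⟩
    · rintro ⟨hx, hy⟩; exact ⟨by linarith, by linarith⟩
  -- global integrability of the reflected-function kernels
  have hHi : Integrable (fun p : ℝ × ℝ => fi p.1 * fi p.2 * |p.1 - p.2| ^ (-lam))
      (volume.prod volume) := by
    refine int_of_quadrants ?_ ?_ ?_ ?_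
    · refine hA1.congr ?_
      filter_upwards [haeS] with p hp
      beta_reduce
      rw [hfiQ1 _ hp.1, hfiQ1 _ hp.2]
    · refine (mpT2.integrableOn_comp_preimage embT2 (s := Ioi 0 ×ˢ Iio 0)).mp ?_
      rw [hpre2]
      refine hB11.congr ?_
      filter_upwards [haeS] with p hp
      simp only [T1, T2, T12, Function.comp, Prod.map, id_eq]
      show _ = fi p.1 * fi (-p.2) * |p.1 - -p.2| ^ (-lam)
      rw [hfiQ1 _ hp.1, hfiQ2 _ hp.2, sub_neg_eq_add, abs_of_pos (by linarith [hp.1, hp.2])]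
    · refine (mpT1.integrableOn_comp_preimage embT1 (s := Iio 0 ×ˢ Ioi 0)).mp ?_
      rw [hpre1]
      refine hB11.congr ?_
      filter_upwards [haeS] with p hp
      simp only [T1, T2, T12, Function.comp, Prod.map, id_eq]
      show _ = fi (-p.1) * fi p.2 * |(-p.1) - p.2| ^ (-lam)
      rw [hfiQ2 _ hp.1, hfiQ1 _ hp.2, show (-p.1) - p.2 = -(p.1 + p.2) by ring, abs_neg,
        abs_of_pos (by linarith [hp.1, hp.2])]
    · refine (mpT12.integrableOn_comp_preimage embT12 (s := Iio 0 ×ˢ Iio 0)).mp ?_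
      rw [hpre12]
      refine hA1.congr ?_
      filter_upwards [haeS] with p hp
      simp only [T1, T2, T12, Function.comp, Prod.map, id_eq]
      show _ = fi (-p.1) * fi (-p.2) * |(-p.1) - -p.2| ^ (-lam)
      rw [hfiQ2 _ hp.1, hfiQ2 _ hp.2, show (-p.1) - -p.2 = -(p.1 - p.2) by ring, abs_neg]
  have hHo : Integrable (fun p : ℝ × ℝ => fo p.1 * fo p.2 * |p.1 - p.2| ^ (-lam))
      (volume.prod volume) := by
    refine int_of_quadrants ?_ ?_ ?_ ?_
    · refine hA2.congr ?_
      filter_upwards [haeS] with p hp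
      beta_reduce
      rw [hfoQ1 _ hp.1, hfoQ1 _ hp.2]
    · refine (mpT2.integrableOn_comp_preimage embT2 (s := Ioi 0 ×ˢ Iio 0)).mp ?_
      rw [hpre2]
      refine hB22.congr ?_
      filter_upwards [haeS] with p hp
      simp only [T1, T2, T12, Function.comp, Prod.map, id_eq]
      show _ = fo p.1 * fo (-p.2) * |p.1 - -p.2| ^ (-lam)
      rw [hfoQ1 _ hp.1, hfoQ2 _ hp.2, sub_neg_eq_add, abs_of_pos (by linarith [hp.1, hp.2])]
    · refine (mpT1.integrableOn_comp_preimage embT1 (s := Iio 0 ×ˢ Ioi 0)).mp ?_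
      rw [hpre1]
      refine hB22.congr ?_
      filter_upwards [haeS] with p hp
      simp only [T1, T2, T12, Function.comp, Prod.map, id_eq]
      show _ = fo (-p.1) * fo p.2 * |(-p.1) - p.2| ^ (-lam)
      rw [hfoQ2 _ hp.1, hfoQ1 _ hp.2, show (-p.1) - p.2 = -(p.1 + p.2) by ring, abs_neg,
        abs_of_pos (by linarith [hp.1, hp.2])]
    · refine (mpT12.integrableOn_comp_preimage embT12 (s := Iio 0 ×ˢ Iio 0)).mp ?_
      rw [hpre12]
      refine hA2.congr ?_
      filter_upwards [haeS] with p hp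
      simp only [T1, T2, T12, Function.comp, Prod.map, id_eq]
      show _ = fo (-p.1) * fo (-p.2) * |(-p.1) - -p.2| ^ (-lam)
      rw [hfoQ2 _ hp.1, hfoQ2 _ hp.2, show (-p.1) - -p.2 = -(p.1 - p.2) by ring, abs_neg]
  -- quadrant-sum integrands
  have hSH : Integrable (fun p : ℝ × ℝ =>
      f p.1 * f p.2 * |p.1 - p.2| ^ (-lam) + f (-p.1) * f p.2 * |(-p.1) - p.2| ^ (-lam)
        + f p.1 * f (-p.2) * |p.1 - -p.2| ^ (-lam)
        + f (-p.1) * f (-p.2) * |(-p.1) - -p.2| ^ (-lam))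
      ((volume.prod volume).restrict (Ioi 0 ×ˢ Ioi 0)) :=
    ((hH.integrableOn.add hHT1.integrableOn).add hHT2.integrableOn).add hHT12.integrableOn
  have hHiT1 : Integrable (fun p : ℝ × ℝ => fi (-p.1) * fi p.2 * |(-p.1) - p.2| ^ (-lam))
      (volume.prod volume) := (mpT1.integrable_comp_emb embT1).mpr hHi
  have hHiT2 : Integrable (fun p : ℝ × ℝ => fi p.1 * fi (-p.2) * |p.1 - -p.2| ^ (-lam))
      (volume.prod volume) := (mpT2.integrable_comp_emb embT2).mpr hHi
  have hHiT12 : Integrable (fun p : ℝ × ℝ => fi (-p.1) * fi (-p.2) * |(-p.1) - -p.2| ^ (-lam))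
      (volume.prod volume) := (mpT12.integrable_comp_emb embT12).mpr hHi
  have hHoT1 : Integrable (fun p : ℝ × ℝ => fo (-p.1) * fo p.2 * |(-p.1) - p.2| ^ (-lam))
      (volume.prod volume) := (mpT1.integrable_comp_emb embT1).mpr hHo
  have hHoT2 : Integrable (fun p : ℝ × ℝ => fo p.1 * fo (-p.2) * |p.1 - -p.2| ^ (-lam))
      (volume.prod volume) := (mpT2.integrable_comp_emb embT2).mpr hHo
  have hHoT12 : Integrable (fun p : ℝ × ℝ => fo (-p.1) * fo (-p.2) * |(-p.1) - -p.2| ^ (-lam))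
      (volume.prod volume) := (mpT12.integrable_comp_emb embT12).mpr hHo
  have hSi : Integrable (fun p : ℝ × ℝ =>
      fi p.1 * fi p.2 * |p.1 - p.2| ^ (-lam) + fi (-p.1) * fi p.2 * |(-p.1) - p.2| ^ (-lam)
        + fi p.1 * fi (-p.2) * |p.1 - -p.2| ^ (-lam)
        + fi (-p.1) * fi (-p.2) * |(-p.1) - -p.2| ^ (-lam))
      ((volume.prod volume).restrict (Ioi 0 ×ˢ Ioi 0)) :=
    ((hHi.integrableOn.add hHiT1.integrableOn).add hHiT2.integrableOn).add hHiT12.integrableOn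
  have hSo : Integrable (fun p : ℝ × ℝ =>
      fo p.1 * fo p.2 * |p.1 - p.2| ^ (-lam) + fo (-p.1) * fo p.2 * |(-p.1) - p.2| ^ (-lam)
        + fo p.1 * fo (-p.2) * |p.1 - -p.2| ^ (-lam)
        + fo (-p.1) * fo (-p.2) * |(-p.1) - -p.2| ^ (-lam))
      ((volume.prod volume).restrict (Ioi 0 ×ˢ Ioi 0)) :=
    ((hHo.integrableOn.add hHoT1.integrableOn).add hHoT2.integrableOn).add hHoT12.integrableOn
  -- express the three `Ilam` values as quadrant integrals
  have eI : Ilam lam f f = ∫ p : ℝ × ℝ,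
      (f p.1 * f p.2 * |p.1 - p.2| ^ (-lam) + f (-p.1) * f p.2 * |(-p.1) - p.2| ^ (-lam)
        + f p.1 * f (-p.2) * |p.1 - -p.2| ^ (-lam)
        + f (-p.1) * f (-p.2) * |(-p.1) - -p.2| ^ (-lam))
      ∂((volume.prod volume).restrict (Ioi 0 ×ˢ Ioi 0)) :=
    (quad hH).trans (II (F := fun x y => f x * f y * |x - y| ^ (-lam)
      + f (-x) * f y * |(-x) - y| ^ (-lam) + f x * f (-y) * |x - -y| ^ (-lam)
      + f (-x) * f (-y) * |(-x) - -y| ^ (-lam)) hSH)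
  have eIi : Ilam lam fi fi = ∫ p : ℝ × ℝ,
      (fi p.1 * fi p.2 * |p.1 - p.2| ^ (-lam) + fi (-p.1) * fi p.2 * |(-p.1) - p.2| ^ (-lam)
        + fi p.1 * fi (-p.2) * |p.1 - -p.2| ^ (-lam)
        + fi (-p.1) * fi (-p.2) * |(-p.1) - -p.2| ^ (-lam))
      ∂((volume.prod volume).restrict (Ioi 0 ×ˢ Ioi 0)) :=
    (quad hHi).trans (II (F := fun x y => fi x * fi y * |x - y| ^ (-lam)
      + fi (-x) * fi y * |(-x) - y| ^ (-lam) + fi x * fi (-y) * |x - -y| ^ (-lam)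
      + fi (-x) * fi (-y) * |(-x) - -y| ^ (-lam)) hSi)
  have eIo : Ilam lam fo fo = ∫ p : ℝ × ℝ,
      (fo p.1 * fo p.2 * |p.1 - p.2| ^ (-lam) + fo (-p.1) * fo p.2 * |(-p.1) - p.2| ^ (-lam)
        + fo p.1 * fo (-p.2) * |p.1 - -p.2| ^ (-lam)
        + fo (-p.1) * fo (-p.2) * |(-p.1) - -p.2| ^ (-lam))
      ∂((volume.prod volume).restrict (Ioi 0 ×ˢ Ioi 0)) :=
    (quad hHo).trans (II (F := fun x y => fo x * fo y * |x - y| ^ (-lam)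
      + fo (-x) * fo y * |(-x) - y| ^ (-lam) + fo x * fo (-y) * |x - -y| ^ (-lam)
      + fo (-x) * fo (-y) * |(-x) - -y| ^ (-lam)) hSo)
  have eR : (∫ x in Ioi (0:ℝ), ∫ y in Ioi (0:ℝ), g x * g y / (x + y) ^ lam)
      = ∫ p : ℝ × ℝ, g p.1 * g p.2 * (p.1 + p.2) ^ (-lam)
        ∂((volume.prod volume).restrict (Ioi 0 ×ˢ Ioi 0)) := by
    have step : ∀ x ∈ Ioi (0:ℝ),
        (∫ y in Ioi (0:ℝ), g x * g y / (x + y) ^ lam)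
          = ∫ y in Ioi (0:ℝ), g x * g y * (x + y) ^ (-lam) := by
      intro x hx
      refine setIntegral_congr_fun measurableSet_Ioi (fun y hy => ?_)
      have hx' : (0:ℝ) < x := hx
      have hy' : (0:ℝ) < y := hy
      rw [Real.rpow_neg (by linarith), div_eq_mul_inv]
    rw [setIntegral_congr_fun measurableSet_Ioi step]
    exact II (F := fun x y => g x * g y * (x + y) ^ (-lam)) hGG
  -- values of g on the positive half line
  have hgQ : ∀ x : ℝ, 0 < x → g x = f x - f (-x) := fun x hx => by
    simp only [hg]; rw [if_pos hx]
  -- positivity of the quadrant integral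
  have hpos : 0 ≤ ∫ p : ℝ × ℝ, g p.1 * g p.2 * (p.1 + p.2) ^ (-lam)
      ∂((volume.prod volume).restrict (Ioi 0 ×ˢ Ioi 0)) := by
    have hGamma : 0 < Real.Gamma lam := Real.Gamma_pos_of_pos h1
    have hexp : ∀ (p : ℝ × ℝ) (t : ℝ),
        t ^ (lam - 1) * ((g p.1 * Real.exp (-(t * p.1))) * (g p.2 * Real.exp (-(t * p.2))))
          = (g p.1 * g p.2) * (t ^ (lam - 1) * Real.exp (-((p.1 + p.2) * t))) := by
      intro p t
      rw [show -((p.1 + p.2) * t) = -(t * p.1) + -(t * p.2) by ring, Real.exp_add]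
      ring
    have hmeasPhi : Measurable (fun q : (ℝ × ℝ) × ℝ =>
        q.2 ^ (lam - 1) * ((g q.1.1 * Real.exp (-(q.2 * q.1.1)))
          * (g q.1.2 * Real.exp (-(q.2 * q.1.2))))) := by fun_prop
    have hbase : ∀ r : ℝ, 0 < r →
        IntegrableOn (fun t : ℝ => t ^ (lam - 1) * Real.exp (-(r * t))) (Ioi 0) volume := by
      intro r hr
      have := integrableOn_rpow_mul_exp_neg_mul_rpow (p := 1) (s := lam - 1) (b := r)
        (by linarith) one_pos hr
      simpa [Real.rpow_one, neg_mul] using this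
    have hPhiInt : Integrable (Function.uncurry fun (p : ℝ × ℝ) (t : ℝ) =>
        t ^ (lam - 1) * ((g p.1 * Real.exp (-(t * p.1))) * (g p.2 * Real.exp (-(t * p.2)))))
        ((((volume.prod volume).restrict (Ioi 0 ×ˢ Ioi 0))).prod (volume.restrict (Ioi 0))) := by
      have hsm : AEStronglyMeasurable (Function.uncurry fun (p : ℝ × ℝ) (t : ℝ) =>
          t ^ (lam - 1) * ((g p.1 * Real.exp (-(t * p.1))) * (g p.2 * Real.exp (-(t * p.2)))))
          ((((volume.prod volume).restrict (Ioi 0 ×ˢ Ioi 0))).prod (volume.restrict (Ioi 0))) :=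
        hmeasPhi.aestronglyMeasurable
      rw [integrable_prod_iff hsm]
      constructor
      · filter_upwards [haeS] with p hp
        have hxy : 0 < p.1 + p.2 := add_pos hp.1 hp.2
        have hint : Integrable (fun t : ℝ =>
            (g p.1 * g p.2) * (t ^ (lam - 1) * Real.exp (-((p.1 + p.2) * t))))
            (volume.restrict (Ioi 0)) := (hbase _ hxy).const_mul _
        exact hint.congr (ae_of_all _ fun t => (hexp p t).symm)
      · refine ((hGG.norm.const_mul (Real.Gamma lam)).congr ?_)
        filter_upwards [haeS] with p hp
        have hxy : 0 < p.1 + p.2 := add_pos hp.1 hp.2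
        have e1 : (∫ t in Ioi (0:ℝ), ‖t ^ (lam - 1) * ((g p.1 * Real.exp (-(t * p.1)))
              * (g p.2 * Real.exp (-(t * p.2))))‖)
            = ∫ t in Ioi (0:ℝ),
              |g p.1 * g p.2| * (t ^ (lam - 1) * Real.exp (-((p.1 + p.2) * t))) := by
          refine setIntegral_congr_fun measurableSet_Ioi (fun t ht => ?_)
          have ht' : (0:ℝ) < t := ht
          rw [hexp p t, Real.norm_eq_abs, abs_mul,
            abs_of_nonneg (mul_nonneg (Real.rpow_nonneg ht'.le _) (Real.exp_pos _).le)]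
        show Real.Gamma lam * ‖g p.1 * g p.2 * (p.1 + p.2) ^ (-lam)‖ = _
        simp only [Function.uncurry_apply_pair]
        rw [e1, integral_const_mul, Real.integral_rpow_mul_exp_neg_mul_Ioi h1 hxy,
          Real.norm_eq_abs, abs_mul, abs_of_nonneg (Real.rpow_nonneg hxy.le _),
          one_div, Real.inv_rpow hxy.le, ← Real.rpow_neg hxy.le]
        ring
    have hswap := integral_integral_swap (f := fun (p : ℝ × ℝ) (t : ℝ) =>
        t ^ (lam - 1) * ((g p.1 * Real.exp (-(t * p.1))) * (g p.2 * Real.exp (-(t * p.2)))))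
      hPhiInt
    have hinner : ∀ᵐ p : ℝ × ℝ ∂((volume.prod volume).restrict (Ioi 0 ×ˢ Ioi 0)),
        (∫ t in Ioi (0:ℝ), t ^ (lam - 1) * ((g p.1 * Real.exp (-(t * p.1)))
            * (g p.2 * Real.exp (-(t * p.2)))))
          = Real.Gamma lam * (g p.1 * g p.2 * (p.1 + p.2) ^ (-lam)) := by
      filter_upwards [haeS] with p hp
      have hxy : 0 < p.1 + p.2 := add_pos hp.1 hp.2
      calc (∫ t in Ioi (0:ℝ), t ^ (lam - 1) * ((g p.1 * Real.exp (-(t * p.1)))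
            * (g p.2 * Real.exp (-(t * p.2)))))
          = ∫ t in Ioi (0:ℝ),
              (g p.1 * g p.2) * (t ^ (lam - 1) * Real.exp (-((p.1 + p.2) * t))) :=
            integral_congr_ae (ae_of_all _ fun t => hexp p t)
        _ = (g p.1 * g p.2) * ((1 / (p.1 + p.2)) ^ lam * Real.Gamma lam) := by
            rw [integral_const_mul, Real.integral_rpow_mul_exp_neg_mul_Ioi h1 hxy]
        _ = Real.Gamma lam * (g p.1 * g p.2 * (p.1 + p.2) ^ (-lam)) := by
            rw [one_div, Real.inv_rpow hxy.le, ← Real.rpow_neg hxy.le]; ring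
    have hnn : 0 ≤ ∫ t in Ioi (0:ℝ), ∫ p : ℝ × ℝ,
        t ^ (lam - 1) * ((g p.1 * Real.exp (-(t * p.1))) * (g p.2 * Real.exp (-(t * p.2))))
        ∂((volume.prod volume).restrict (Ioi 0 ×ˢ Ioi 0)) := by
      refine integral_nonneg_of_ae ?_
      filter_upwards [ae_restrict_mem measurableSet_Ioi] with t ht
      have ht' : (0:ℝ) < t := ht
      have hval : (∫ p : ℝ × ℝ,
          t ^ (lam - 1) * ((g p.1 * Real.exp (-(t * p.1))) * (g p.2 * Real.exp (-(t * p.2))))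
          ∂((volume.prod volume).restrict (Ioi 0 ×ˢ Ioi 0)))
          = t ^ (lam - 1) * ((∫ x in Ioi (0:ℝ), g x * Real.exp (-(t * x)))
              * (∫ y in Ioi (0:ℝ), g y * Real.exp (-(t * y)))) := by
        rw [integral_const_mul, ← Measure.prod_restrict]
        rw [show (∫ p : ℝ × ℝ, (g p.1 * Real.exp (-(t * p.1))) * (g p.2 * Real.exp (-(t * p.2)))
            ∂((volume.restrict (Ioi 0)).prod (volume.restrict (Ioi 0))))
            = (∫ x in Ioi (0:ℝ), g x * Real.exp (-(t * x)))
              * (∫ y in Ioi (0:ℝ), g y * Real.exp (-(t * y))) from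
          integral_prod_mul (fun x => g x * Real.exp (-(t * x)))
            (fun y => g y * Real.exp (-(t * y)))]
      rw [hval]
      exact mul_nonneg (Real.rpow_nonneg ht'.le _) (mul_self_nonneg _)
    have hPe : Real.Gamma lam * (∫ p : ℝ × ℝ, g p.1 * g p.2 * (p.1 + p.2) ^ (-lam)
        ∂((volume.prod volume).restrict (Ioi 0 ×ˢ Ioi 0)))
        = ∫ t in Ioi (0:ℝ), ∫ p : ℝ × ℝ,
          t ^ (lam - 1) * ((g p.1 * Real.exp (-(t * p.1))) * (g p.2 * Real.exp (-(t * p.2))))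
          ∂((volume.prod volume).restrict (Ioi 0 ×ˢ Ioi 0)) := by
      rw [← integral_const_mul]
      exact ((integral_congr_ae hinner).symm).trans hswap
    nlinarith [hPe ▸ hnn, hGamma]
  refine ⟨?_, eR ▸ hpos⟩
  have hc : Integrable (fun p : ℝ × ℝ => (1/2 : ℝ) *
      (fi p.1 * fi p.2 * |p.1 - p.2| ^ (-lam) + fi (-p.1) * fi p.2 * |(-p.1) - p.2| ^ (-lam)
        + fi p.1 * fi (-p.2) * |p.1 - -p.2| ^ (-lam)
        + fi (-p.1) * fi (-p.2) * |(-p.1) - -p.2| ^ (-lam)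
        + (fo p.1 * fo p.2 * |p.1 - p.2| ^ (-lam) + fo (-p.1) * fo p.2 * |(-p.1) - p.2| ^ (-lam)
        + fo p.1 * fo (-p.2) * |p.1 - -p.2| ^ (-lam)
        + fo (-p.1) * fo (-p.2) * |(-p.1) - -p.2| ^ (-lam))))
      ((volume.prod volume).restrict (Ioi 0 ×ˢ Ioi 0)) := (hSi.add hSo).const_mul _
  rw [eIi, eIo, eI, eR, ← integral_add hSi hSo, ← integral_const_mul,
    ← integral_sub hc hSH]
  refine integral_congr_ae ?_
  filter_upwards [haeS] with p hp
  have k1 : |(-p.1) - p.2| = p.1 + p.2 := by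
    rw [show (-p.1) - p.2 = -(p.1 + p.2) by ring, abs_neg,
      abs_of_pos (by linarith [hp.1, hp.2])]
  have k2 : |p.1 - -p.2| = p.1 + p.2 := by
    rw [sub_neg_eq_add, abs_of_pos (by linarith [hp.1, hp.2])]
  have k3 : |(-p.1) - -p.2| = |p.1 - p.2| := by
    rw [show (-p.1) - -p.2 = -(p.1 - p.2) by ring, abs_neg]
  beta_reduce
  rw [k1, k2, k3, hfiQ1 _ hp.1, hfiQ1 _ hp.2, hfiQ2 _ hp.1, hfiQ2 _ hp.2,
    hfoQ1 _ hp.1, hfoQ1 _ hp.2, hfoQ2 _ hp.1, hfoQ2 _ hp.2, hgQ _ hp.1, hgQ _ hp.2]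
  ring





end RPaux

open RPaux in
theorem reflection_positivity_line (lam : ℝ) (h1 : 0 < lam) (h2 : lam < 1)
    (f : ℝ → ℝ) (hf : Integrable f)
    (hfin : (∫⁻ x : ℝ, ∫⁻ y : ℝ, ENNReal.ofReal (|f x| * |f y| * |x - y| ^ (-lam))) ≠ ⊤)
    (fi fo g : ℝ → ℝ)
    (hfi : fi = fun x => if 0 ≤ x then f x else f (-x))
    (hfo : fo = fun x => if 0 ≤ x then f (-x) else f x)
    (hg : g = fun x => if 0 < x then f x - f (-x) else 0) :
    ((1/2) * (Ilam lam fi fi + Ilam lam fo fo) - Ilam lam f f =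
      ∫ x in Ioi (0:ℝ), ∫ y in Ioi (0:ℝ), g x * g y / (x + y) ^ lam) ∧
    0 ≤ ∫ x in Ioi (0:ℝ), ∫ y in Ioi (0:ℝ), g x * g y / (x + y) ^ lam := by
  have hmf' : Measurable (hf.1.mk f) := hf.1.stronglyMeasurable_mk.measurable
  set f' : ℝ → ℝ := hf.1.mk f with hf'def
  have hae : f =ᵐ[(volume : Measure ℝ)] f' := hf.1.ae_eq_mk
  have haen : (fun x => f (-x)) =ᵐ[(volume : Measure ℝ)] (fun x => f' (-x)) := by
    rw [Filter.EventuallyEq, ae_iff]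
    have h0 : (volume : Measure ℝ) {x : ℝ | ¬ f x = f' x} = 0 := by
      rw [Filter.EventuallyEq, ae_iff] at hae; exact hae
    have hset : {x : ℝ | ¬ f (-x) = f' (-x)} = Neg.neg ⁻¹' {x : ℝ | ¬ f x = f' x} := rfl
    rw [hset, Measure.measure_preimage_neg]
    exact h0
  have hfin' : (∫⁻ x : ℝ, ∫⁻ y : ℝ, ENNReal.ofReal (|f' x| * |f' y| * |x - y| ^ (-lam))) ≠ ⊤ := by
    have houter : (fun x => ∫⁻ y : ℝ, ENNReal.ofReal (|f x| * |f y| * |x - y| ^ (-lam)))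
        =ᵐ[(volume : Measure ℝ)]
        (fun x => ∫⁻ y : ℝ, ENNReal.ofReal (|f' x| * |f' y| * |x - y| ^ (-lam))) := by
      filter_upwards [hae] with x hx
      refine lintegral_congr_ae ?_
      filter_upwards [hae] with y hy
      rw [hx, hy]
    rwa [lintegral_congr_ae houter] at hfin
  have h := main_meas lam h1 h2 f' hmf' (hf.congr hae)
    hfin' (fun x => if 0 ≤ x then f' x else f' (-x)) (fun x => if 0 ≤ x then f' (-x) else f' x)
    (fun x => if 0 < x then f' x - f' (-x) else 0) rfl rfl rfl
  have hfie : fi =ᵐ[(volume : Measure ℝ)] (fun x => if 0 ≤ x then f' x else f' (-x)) := by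
    filter_upwards [hae, haen] with x hx hnx
    rw [hfi]
    simp only
    rw [hx, hnx]
  have hfoe : fo =ᵐ[(volume : Measure ℝ)] (fun x => if 0 ≤ x then f' (-x) else f' x) := by
    filter_upwards [hae, haen] with x hx hnx
    rw [hfo]
    simp only
    rw [hx, hnx]
  have hge : g =ᵐ[(volume : Measure ℝ)] (fun x => if 0 < x then f' x - f' (-x) else 0) := by
    filter_upwards [hae, haen] with x hx hnx
    rw [hg]
    simp only
    rw [hx, hnx]
  have hdbl : (∫ x in Ioi (0:ℝ), ∫ y in Ioi (0:ℝ), g x * g y / (x + y) ^ lam)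
      = ∫ x in Ioi (0:ℝ), ∫ y in Ioi (0:ℝ),
          (if 0 < x then f' x - f' (-x) else 0) * (if 0 < y then f' y - f' (-y) else 0)
            / (x + y) ^ lam := by
    refine integral_congr_ae ?_
    filter_upwards [ae_restrict_of_ae hge] with x hx
    rw [hx]
    refine integral_congr_ae ?_
    filter_upwards [ae_restrict_of_ae hge] with y hy
    rw [hy]
  rw [Ilam_congr hfie, Ilam_congr hfoe, Ilam_congr hae, hdbl]
  exact h
end

section
/- Let $\mu$ be a nonnegative finite Borel measure on $\mathbb{R}^N$ with $\mu(\mathbb{R}^N) > 0$, satisfying: for every $a \in \mathbb{R}^N$ there exists $r_a > 0$ such that $\mu$ is invariant under inversion through the sphere of radius $r_a$ centered at $a$. Then $\mu(\Omega) > 0$ for every nonempty open set $\Omega \subset \mathbb{R}^N$. -/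
/-!
Inversion through a sphere centred at `a` exchanges small balls around `a` with neighbourhoods
of infinity, so invariance gives `μ (ball a ρ) = μ (closedBall a (r ^ 2 / ρ))ᶜ`. If `μ` vanished on
some ball `B(b, ρ)`, it would vanish outside a large ball around `b`; since every other point `c`
is also a centre of inversion, and a small ball around `c` is exchanged with a region that lies
outside that large ball, `μ` would vanish near every point, hence `μ = 0`.
-/

open MeasureTheory Set

namespace SphereInv

variable {N : ℕ}

/-- The centre is removed from the preimage: `sphereInv a r a = a` only through the junk value of
division by zero. -/
def IsInvariant (μ : Measure (EuclideanSpace ℝ (Fin N))) (a : EuclideanSpace ℝ (Fin N))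
    (r : ℝ) : Prop :=
  ∀ A : Set (EuclideanSpace ℝ (Fin N)), MeasurableSet A → μ (sphereInv a r ⁻¹' A \ {a}) = μ A

theorem dist_sphereInv_center (a : EuclideanSpace ℝ (Fin N)) (r : ℝ)
    (x : EuclideanSpace ℝ (Fin N)) : dist (sphereInv a r x) a = r ^ 2 / dist x a := by
  rw [dist_eq_norm, dist_eq_norm, sphereInv, add_sub_cancel_right, norm_smul, Real.norm_eq_abs,
    abs_of_nonneg (by positivity)]
  rcases eq_or_ne ‖x - a‖ 0 with hx | hx
  · simp [hx]
  · field_simp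

theorem preimage_ball_diff_center {ρ : ℝ} (hρ : 0 < ρ) (a : EuclideanSpace ℝ (Fin N)) (r : ℝ) :
    sphereInv a r ⁻¹' Metric.ball a ρ \ {a} = (Metric.closedBall a (r ^ 2 / ρ))ᶜ := by
  ext x
  simp only [mem_sdiff, mem_preimage, Metric.mem_ball, mem_singleton_iff, mem_compl_iff,
    Metric.mem_closedBall, not_le, dist_sphereInv_center]
  rcases eq_or_ne x a with rfl | hx
  · simp only [dist_self, not_true_eq_false, and_false, false_iff, not_lt]
    positivity
  · have hxa : 0 < dist x a := dist_pos.mpr hx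
    rw [div_lt_iff₀ hxa, div_lt_iff₀ hρ, mul_comm]
    exact and_iff_left hx

namespace IsInvariant

variable {μ : Measure (EuclideanSpace ℝ (Fin N))} {a : EuclideanSpace ℝ (Fin N)} {r : ℝ}

theorem measure_compl_closedBall (hμ : IsInvariant μ a r) {ρ : ℝ} (hρ : 0 < ρ) :
    μ (Metric.closedBall a (r ^ 2 / ρ))ᶜ = μ (Metric.ball a ρ) := by
  rw [← preimage_ball_diff_center hρ, hμ _ Metric.isOpen_ball.measurableSet]

theorem measure_ball_eq_zero (hμ : IsInvariant μ a r) (hr : r ≠ 0)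
    {b : EuclideanSpace ℝ (Fin N)} {R : ℝ} (hR : 0 < R)
    (hfar : μ (Metric.closedBall b R)ᶜ = 0) :
    μ (Metric.ball a (r ^ 2 / (R + dist b a))) = 0 := by
  have hRb : 0 < R + dist b a := by positivity
  rw [← hμ.measure_compl_closedBall (by positivity), div_div_cancel₀ (by positivity)]
  exact measure_mono_null (compl_subset_compl.mpr
    (Metric.closedBall_subset_closedBall' le_rfl)) hfar

end IsInvariant

theorem measure_eq_zero_of_measure_ball_eq_zero {μ : Measure (EuclideanSpace ℝ (Fin N))}
    (h : ∀ a, ∃ r > (0 : ℝ), IsInvariant μ a r) {b : EuclideanSpace ℝ (Fin N)} {ρ : ℝ}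
    (hρ : 0 < ρ) (hb : μ (Metric.ball b ρ) = 0) : μ = 0 := by
  obtain ⟨r, hr, hμb⟩ := h b
  have hfar : μ (Metric.closedBall b (r ^ 2 / ρ))ᶜ = 0 := by
    rw [hμb.measure_compl_closedBall hρ, hb]
  rw [← Measure.measure_univ_eq_zero]
  refine measure_null_of_locally_null _ fun c _ => ?_
  obtain ⟨s, hs, hμc⟩ := h c
  refine ⟨_, ?_, hμc.measure_ball_eq_zero hs.ne' (by positivity) hfar⟩
  rw [nhdsWithin_univ]
  exact Metric.ball_mem_nhds c (by positivity)

end SphereInv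

theorem inversion_invariant_positive_on_open_general (N : ℕ)
    (μ : Measure (EuclideanSpace ℝ (Fin N)))
    (hpos : 0 < μ Set.univ)
    (h : ∀ a : EuclideanSpace ℝ (Fin N), ∃ r > (0:ℝ),
      ∀ A : Set (EuclideanSpace ℝ (Fin N)), MeasurableSet A →
        μ (sphereInv a r ⁻¹' A \ {a}) = μ A) :
    ∀ Ω : Set (EuclideanSpace ℝ (Fin N)), IsOpen Ω → Ω.Nonempty → 0 < μ Ω := by
  rintro Ω hΩ ⟨b, hb⟩
  obtain ⟨ρ, hρ, hball⟩ := Metric.isOpen_iff.mp hΩ b hb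
  refine pos_of_ne_zero fun hΩ0 => hpos.ne' ?_
  rw [SphereInv.measure_eq_zero_of_measure_ball_eq_zero h hρ (measure_mono_null hball hΩ0),
    Measure.coe_zero, Pi.zero_apply]

theorem inversion_invariant_positive_on_open (N : ℕ) (hN : 1 ≤ N)
    (μ : Measure (EuclideanSpace ℝ (Fin N))) [IsFiniteMeasure μ]
    (hpos : 0 < μ Set.univ)
    (h : ∀ a : EuclideanSpace ℝ (Fin N), ∃ r > (0:ℝ),
      ∀ A : Set (EuclideanSpace ℝ (Fin N)), MeasurableSet A →
        μ (sphereInv a r ⁻¹' A \ {a}) = μ A) :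
    ∀ Ω : Set (EuclideanSpace ℝ (Fin N)), IsOpen Ω → Ω.Nonempty → 0 < μ Ω :=
  inversion_invariant_positive_on_open_general N μ hpos h
end

section
/- Let $\mu$ be a nonnegative finite Borel measure on $\mathbb{R}^N$ with $\mu(\{0\}) = 0$. Suppose $\mu$ is radial (if two balls have the same radius and their centers have the same norm, they have equal $\mu$-measure) and decreasing (if $B, B'$ are open balls of the same radius $r$ centered at $te$ and $t'e$ with $e$ a unit vector, $t \geq t' \geq 0$ and $t - r > t' + r$, then $\mu(B) \leq \mu(B')$). Then $\mu$ is absolutely continuous with respect to Lebesgue measure. -/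
/-!
Fubini applied to `{(y, z) | dist y z < r}` gives `∫⁻ y, μ (ball y r) ∂ν = μ univ * ν (ball 0 r)` for
a Haar measure `ν`. Radiality and monotonicity along rays make `y ↦ μ (ball y r)` at least
`μ (ball x r)` on the whole ball `ball 0 (‖x‖ - 2r)`, so away from the origin `μ` has bounded upper
density with respect to `ν`. The Besicovitch covering theorem turns this into `μ ≤ c • ν` on each
`{a ≤ ‖x‖}`, and `μ {0} = 0` takes care of the origin.
-/

open MeasureTheory Metric Filter Topology Set
open scoped NNReal ENNReal

section Fubini

variable {α : Type*} [PseudoMetricSpace α] [SecondCountableTopology α] [MeasurableSpace α]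
  [OpensMeasurableSpace α]

theorem lintegral_measure_ball_comm (μ ν : Measure α) [SFinite μ] [SFinite ν] (r : ℝ) :
    ∫⁻ y, μ (ball y r) ∂ν = ∫⁻ z, ν (ball z r) ∂μ := by
  have hU : MeasurableSet {p : α × α | dist p.2 p.1 < r} :=
    (isOpen_lt (continuous_snd.dist continuous_fst) continuous_const).measurableSet
  calc ∫⁻ y, μ (ball y r) ∂ν = ν.prod μ {p | dist p.2 p.1 < r} := (Measure.prod_apply hU).symm
    _ = ∫⁻ z, ν (ball z r) ∂μ := by
      rw [Measure.prod_apply_symm hU]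
      refine lintegral_congr fun z => congrArg ν (ext fun y => ?_)
      rw [mem_ball, dist_comm]
      rfl

end Fubini

section Besicovitch

variable {α : Type*} [MetricSpace α] [SecondCountableTopology α] [MeasurableSpace α] [BorelSpace α]
  [HasBesicovitchCovering α]

theorem measure_le_of_frequently_measure_closedBall_le {μ ν : Measure α} [SFinite μ]
    [IsLocallyFiniteMeasure ν] {s : Set α}
    (h : ∀ x ∈ s, ∃ᶠ r in 𝓝[>] 0, μ (closedBall x r) ≤ ν (closedBall x r)) : μ s ≤ ν s :=
  (Besicovitch.vitaliFamily μ).measure_le_of_frequently_le ν Measure.AbsolutelyContinuous.rfl s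
    fun x hx => (Besicovitch.tendsto_filterAt μ x).frequently (h x hx)

end Besicovitch

namespace MeasureTheory.Measure

variable {E : Type*} [NormedAddCommGroup E] [NormedSpace ℝ E] [MeasurableSpace E]

def IsRadial (μ : Measure E) : Prop :=
  ∀ (a a' : E) (r : ℝ), ‖a‖ = ‖a'‖ → μ (ball a r) = μ (ball a' r)

def IsRadiallyDecreasing (μ : Measure E) : Prop :=
  ∀ e : E, ‖e‖ = 1 → ∀ t t' r : ℝ, t' ≤ t → 0 ≤ t' → t' + r < t - r →
    μ (ball (t • e) r) ≤ μ (ball (t' • e) r)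

variable {μ : Measure E}

theorem IsRadial.measure_ball_le_of_norm_add_lt (hrad : μ.IsRadial)
    (hdec : μ.IsRadiallyDecreasing) {x y : E} {r : ℝ} (h : ‖y‖ + 2 * r < ‖x‖) :
    μ (ball x r) ≤ μ (ball y r) := by
  rcases le_or_gt r 0 with hr | hr
  · simp [ball_eq_empty.2 hr]
  have hx : 0 < ‖x‖ := by linarith [norm_nonneg y]
  set e := ‖x‖⁻¹ • x
  have he : ‖e‖ = 1 := by simp [e, norm_smul, hx.ne']
  calc μ (ball x r) = μ (ball (‖x‖ • e) r) := by rw [smul_inv_smul₀ hx.ne']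
    _ ≤ μ (ball (‖y‖ • e) r) := hdec e he _ _ r (by linarith) (norm_nonneg y) (by linarith)
    _ = μ (ball y r) := hrad _ y r (by simp [norm_smul, he])

variable [FiniteDimensional ℝ E] [BorelSpace E] (ν : Measure E) [ν.IsAddHaarMeasure]
  [IsFiniteMeasure μ]

theorem IsRadial.measure_ball_mul_le (hrad : μ.IsRadial) (hdec : μ.IsRadiallyDecreasing)
    (x : E) (r : ℝ) : μ (ball x r) * ν (ball 0 (‖x‖ - 2 * r)) ≤ μ univ * ν (ball 0 r) :=
  calc μ (ball x r) * ν (ball 0 (‖x‖ - 2 * r))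
      = ∫⁻ _ in ball 0 (‖x‖ - 2 * r), μ (ball x r) ∂ν := by rw [setLIntegral_const]
    _ ≤ ∫⁻ y in ball 0 (‖x‖ - 2 * r), μ (ball y r) ∂ν := by
      refine setLIntegral_mono' measurableSet_ball fun y hy => ?_
      rw [mem_ball_zero_iff] at hy
      exact hrad.measure_ball_le_of_norm_add_lt hdec (by linarith)
    _ ≤ ∫⁻ y, μ (ball y r) ∂ν := setLIntegral_le_lintegral _ _
    _ = ∫⁻ z, ν (ball z r) ∂μ := lintegral_measure_ball_comm μ ν r
    _ = μ univ * ν (ball 0 r) := by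
      simp only [addHaar_ball_center, lintegral_const, mul_comm]

theorem IsRadial.exists_measure_closedBall_le (hrad : μ.IsRadial)
    (hdec : μ.IsRadiallyDecreasing) {a : ℝ} (ha : 0 < a) :
    ∃ c : ℝ≥0, ∀ x : E, a ≤ ‖x‖ → ∀ r, 0 < r → r ≤ a / 8 →
      μ (closedBall x r) ≤ c * ν (closedBall x r) := by
  set V := ν (ball 0 (a / 2))
  have hV : V ≠ 0 := (measure_ball_pos ν _ (by linarith)).ne'
  set K := μ univ * ENNReal.ofReal (2 ^ Module.finrank ℝ E)
  have hK : K / V ≠ ∞ :=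
    ENNReal.div_ne_top (ENNReal.mul_ne_top (measure_ne_top μ _) ENNReal.ofReal_ne_top) hV
  refine ⟨(K / V).toNNReal, fun x hx r hr hra => ?_⟩
  rw [ENNReal.coe_toNNReal hK, ← ENNReal.mul_div_right_comm,
    ENNReal.le_div_iff_mul_le (Or.inl hV) (Or.inl measure_ball_lt_top.ne)]
  calc μ (closedBall x r) * V
      ≤ μ (ball x (2 * r)) * ν (ball 0 (‖x‖ - 2 * (2 * r))) := by
        exact mul_le_mul' (measure_mono (closedBall_subset_ball (by linarith)))
          (measure_mono (ball_subset_ball (by linarith)))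
    _ ≤ μ univ * ν (ball 0 (2 * r)) := hrad.measure_ball_mul_le ν hdec x _
    _ = K * ν (ball x r) := by
        rw [addHaar_ball_mul_of_pos ν 0 two_pos, addHaar_ball_center ν x, mul_assoc]
    _ ≤ K * ν (closedBall x r) := by gcongr; exact ball_subset_closedBall

theorem IsRadial.measure_diff_ball_zero_eq_zero (hrad : μ.IsRadial)
    (hdec : μ.IsRadiallyDecreasing) {a : ℝ} (ha : 0 < a) {s : Set E} (hs : ν s = 0) :
    μ (s \ ball 0 a) = 0 := by
  obtain ⟨c, hc⟩ := hrad.exists_measure_closedBall_le ν hdec ha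
  have hle : μ (s \ ball 0 a) ≤ (c • ν) (s \ ball 0 a) := by
    refine measure_le_of_frequently_measure_closedBall_le fun x hx => Eventually.frequently ?_
    have hx : a ≤ ‖x‖ := by simpa using hx.2
    filter_upwards [Ioc_mem_nhdsGT (by positivity : 0 < a / 8)] with r hr
    simpa using hc x hx r hr.1 hr.2
  have hνs : (c • ν) s = 0 := by simp [hs]
  exact le_zero_iff.1 (hle.trans_eq (measure_mono_null sdiff_subset hνs))

end MeasureTheory.Measure

theorem radial_decreasing_abs_continuous_general (N : ℕ)
    (μ : Measure (EuclideanSpace ℝ (Fin N))) [IsFiniteMeasure μ]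
    (h0 : μ {0} = 0)
    (hrad : ∀ (a a' : EuclideanSpace ℝ (Fin N)) (r : ℝ), ‖a‖ = ‖a'‖ →
      μ (ball a r) = μ (ball a' r))
    (hdec : ∀ e : EuclideanSpace ℝ (Fin N), ‖e‖ = 1 → ∀ t t' r : ℝ,
      t' ≤ t → 0 ≤ t' → t' + r < t - r →
      μ (ball (t • e) r) ≤ μ (ball (t' • e) r)) :
    μ ≪ volume := by
  intro s hs
  have hcover : s \ {0} ⊆ ⋃ n : ℕ, s \ ball 0 (1 / (n + 1)) := by
    rintro x ⟨hxs, hx0⟩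
    obtain ⟨n, hn⟩ := exists_nat_one_div_lt (norm_pos_iff.2 hx0)
    exact mem_iUnion.2 ⟨n, hxs, by simpa using hn.le⟩
  rw [← measure_sdiff_null h0]
  exact measure_mono_null hcover <| measure_iUnion_null fun n =>
    Measure.IsRadial.measure_diff_ball_zero_eq_zero volume hrad hdec (by positivity) hs

theorem radial_decreasing_abs_continuous (N : ℕ) (hN : 1 ≤ N)
    (μ : Measure (EuclideanSpace ℝ (Fin N))) [IsFiniteMeasure μ]
    (h0 : μ {0} = 0)
    (hrad : ∀ (a a' : EuclideanSpace ℝ (Fin N)) (r : ℝ), ‖a‖ = ‖a'‖ →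
      μ (ball a r) = μ (ball a' r))
    (hdec : ∀ e : EuclideanSpace ℝ (Fin N), ‖e‖ = 1 → ∀ t t' r : ℝ,
      t' ≤ t → 0 ≤ t' → t' + r < t - r →
      μ (ball (t • e) r) ≤ μ (ball (t' • e) r)) :
    μ ≪ volume :=
  radial_decreasing_abs_continuous_general N μ h0 hrad hdec
end
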